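/- arXiv:1602.07586 — 5 statements merged into one kernel-verified Lean document; each statement's English description precedes it below -/
import Mathlib

section
/- The rank function of an evidential structure need not be monotone with respect to the strict specificity order: there exists an evidential structure containing elements z ≺ y with ρ(z) = 2 and ρ(y) = 3. -/
/-! The rank is the length of the *shortest* ⋖-chain to the root. In the witness, `z` lies
immediately below both `y` (of rank 3, via `y ⋖ x ⋖ w ⋖ ∅`) and `q` (of rank 1, via `q ⋖ ∅`);
the short route through `q` gives `z` rank 2 although `z ≺ y`. -/

namespace Evid

variable {X : Type*}

/-- `x` is strictly more specific than `y`. -/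
def Strict (le : X → X → Prop) (x y : X) : Prop := le x y ∧ ¬ le y x

/-- `x` is immediately more specific than `y`. -/
def Imm (le : X → X → Prop) (x y : X) : Prop :=
  Strict le x y ∧ ¬ ∃ w, Strict le x w ∧ Strict le w y

/-- `x` and `y` are incompatible: no common lower bound. -/
def Incompat (le : X → X → Prop) (x y : X) : Prop :=
  ¬ ∃ z, le z x ∧ le z y

/-- An evidential structure on carrier `X` with relation `le` and root `root`. -/
structure IsEvid (le : X → X → Prop) (root : X) : Prop where
  refl : ∀ x, le x x
  trans : ∀ x y z, le x y → le y z → le x z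
  wf : ¬ ∃ f : ℕ → X, ∀ k, Strict le (f (k+1)) (f k)
  root_top : ∀ x, x ≠ root → Strict le x root
  nontriv : ∃ x, x ≠ root
  interp : ∀ x z, Strict le x z → ∃ y, Imm le x y ∧ le y z
  finBranch : ∀ x, {w | Imm le w x}.Finite
  incompat_wit : ∀ x z, ¬ le x z → ∃ y, le y x ∧ Incompat le y z

/-- There is a chain of `n` immediate-specificity steps from `x` up to the root. -/
def ChainSpec (le : X → X → Prop) (root x : X) (n : ℕ) : Prop :=
  (x = root ∧ n = 0) ∨
  ∃ g : ℕ → X, g 0 = x ∧ g n = root ∧ ∀ k < n, Imm le (g k) (g (k+1))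

/-- `ρ` is the rank function: `ρ x` is the minimal chain length from `x` to the root. -/
def IsRank (le : X → X → Prop) (root : X) (ρ : X → ℕ) : Prop :=
  ∀ x, ChainSpec le root x (ρ x) ∧ ∀ n, ChainSpec le root x n → ρ x ≤ n

/-- An experimentation tree `(T, leT)` inside the evidential structure `(X, le)`. -/
structure IsTreeIn (le : X → X → Prop) (root : X) (T : Set X) (leT : X → X → Prop) : Prop where
  root_mem : root ∈ T
  nontriv : T ≠ {root}
  sub : ∀ x y, leT x y → le x y ∧ x ∈ T ∧ y ∈ T
  refl : ∀ x ∈ T, leT x x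
  trans : ∀ x y z, leT x y → leT y z → leT x z
  unique_succ : ∀ x ∈ T, x ≠ root → ∃! y, Imm leT x y
  imm_imm : ∀ x y, Imm leT x y → Imm le x y
  fork : ∀ x ∈ T, (∃ w, Strict leT w x) → ∃ y z, Imm leT y x ∧ Imm leT z x ∧ y ≠ z
  pred_incompat : ∀ x y z, Imm leT y x → Imm leT z x → y ≠ z → Incompat le y z
  unbiased : ∀ z x, x ∈ T → Strict le z x → (∃ w, Strict leT w x) →
    ∃ v w, le v z ∧ le v w ∧ Imm leT w x

/-- `x` is maximally specific. -/
def MaxSpec (le : X → X → Prop) (x : X) : Prop := ¬ ∃ w, Strict le w x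

/-- An evidential structure that is itself an experimentation tree. -/
def IsExpTree (le : X → X → Prop) (root : X) : Prop :=
  IsEvid le root ∧
  (∀ x, x ≠ root → ∃! y, Imm le x y) ∧
  (∀ x, ¬ MaxSpec le x → ∃ y z, Imm le y x ∧ Imm le z x ∧ y ≠ z) ∧
  (∀ x y z, Imm le y x → Imm le z x → y ≠ z → Incompat le y z)

section General

variable {le : X → X → Prop} {root : X}

instance [DecidableRel le] : DecidableRel (Strict le) :=
  fun _ _ => inferInstanceAs (Decidable (_ ∧ _))

instance [Fintype X] [DecidableRel le] : DecidableRel (Imm le) :=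
  fun _ _ => inferInstanceAs (Decidable (_ ∧ ¬ ∃ _, _))

instance [Fintype X] [DecidableRel le] : DecidableRel (Incompat le) :=
  fun _ _ => inferInstanceAs (Decidable (¬ ∃ _, _))

theorem not_exists_strict_descending_of_finite [Finite X]
    (htrans : ∀ x y z, le x y → le y z → le x z) :
    ¬ ∃ f : ℕ → X, ∀ k, Strict le (f (k + 1)) (f k) := by
  have : IsTrans X (Strict le) :=
    ⟨fun a b c hab hbc => ⟨htrans a b c hab.1 hbc.1, fun hca => hab.2 (htrans b c a hbc.1 hca)⟩⟩
  have : Std.Irrefl (Strict le) := ⟨fun a h => h.2 h.1⟩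
  rintro ⟨f, hf⟩
  exact (wellFounded_iff_isEmpty_descending_chain.1
    (Finite.wellFounded_of_trans_of_irrefl (Strict le))).false ⟨f, hf⟩

theorem le_of_chainSpec {ρ : X → ℕ} (hroot : ρ root = 0)
    (himm : ∀ a b, Imm le a b → ρ a ≤ ρ b + 1) {x : X} {n : ℕ} (hx : ChainSpec le root x n) :
    ρ x ≤ n := by
  rcases hx with ⟨rfl, rfl⟩ | ⟨g, rfl, hgn, hg⟩
  · exact hroot.le
  · have hprefix : ∀ j ≤ n, ρ (g 0) ≤ ρ (g j) + j := by
      intro j hj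
      induction j with
      | zero => simp
      | succ j ih => linarith [himm _ _ (hg j (by omega)), ih (by omega)]
    simpa [hgn, hroot] using hprefix n le_rfl

theorem chainSpec_iterate_parent {ρ : X → ℕ} {parent : X → X} (hroot : ρ root = 0)
    (hparent : ∀ x, x ≠ root → Imm le x (parent x) ∧ ρ x = ρ (parent x) + 1) (x : X) :
    ChainSpec le root x (ρ x) := by
  have hne_root : ∀ y, ρ y ≠ 0 → y ≠ root := fun y hy h => hy (h ▸ hroot)
  have hrank : ∀ k ≤ ρ x, ρ (parent^[k] x) = ρ x - k := by
    intro k hk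
    induction k with
    | zero => rfl
    | succ k ih =>
      have := ih (by omega)
      have hstep := (hparent _ (hne_root (parent^[k] x) (by omega))).2
      rw [Function.iterate_succ_apply']
      omega
  refine Or.inr ⟨fun k => parent^[k] x, rfl, ?_, fun k hk => ?_⟩
  · show parent^[ρ x] x = root
    by_contra h
    have := (hparent _ h).2
    have := hrank _ le_rfl
    omega
  · have := hrank k hk.le
    simp only [Function.iterate_succ_apply']
    exact (hparent _ (hne_root (parent^[k] x) (by omega))).1

theorem isRank_of_parent {ρ : X → ℕ} (parent : X → X) (hroot : ρ root = 0)
    (hparent : ∀ x, x ≠ root → Imm le x (parent x) ∧ ρ x = ρ (parent x) + 1)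
    (himm : ∀ a b, Imm le a b → ρ a ≤ ρ b + 1) :
    IsRank le root ρ :=
  fun x => ⟨chainSpec_iterate_parent hroot hparent x, fun _ => le_of_chainSpec hroot himm⟩

end General

inductive Node : Type
  | root | q | s | t | u | v | w | x | y | z
  deriving DecidableEq

namespace Node

instance : Fintype Node where
  elems := {root, q, s, t, u, v, w, x, y, z}
  complete a := by cases a <;> simp

/-- The elements lying above `a` in the reflexive-transitive closure of the covering pairs
`w ⋖ ∅, t ⋖ w, x ⋖ w, u ⋖ x, y ⋖ x, v ⋖ y, z ⋖ y, q ⋖ ∅, s ⋖ q, z ⋖ q`. -/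
def above : Node → List Node
  | root => [root]
  | q => [q, root]
  | w => [w, root]
  | s => [s, q, root]
  | t => [t, w, root]
  | x => [x, w, root]
  | u => [u, x, w, root]
  | y => [y, x, w, root]
  | v => [v, y, x, w, root]
  | z => [z, y, x, w, q, root]

instance : LE Node := ⟨fun a b => b ∈ a.above⟩

instance : DecidableRel (α := Node) (· ≤ ·) := fun a b => inferInstanceAs (Decidable (b ∈ a.above))

def rank : Node → ℕ
  | root => 0
  | q | w => 1
  | s | t | x | z => 2
  | u | y => 3
  | v => 4

def parent : Node → Node
  | root | q | w => root
  | s | z => q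
  | t | x => w
  | u | y => x
  | v => y

theorem isEvid : IsEvid (X := Node) (· ≤ ·) root where
  refl := by decide
  trans := by decide
  wf := not_exists_strict_descending_of_finite (by decide)
  root_top := by decide
  nontriv := by decide
  interp := by decide
  finBranch _ := Set.toFinite _
  incompat_wit := by decide

theorem isRank : IsRank (X := Node) (· ≤ ·) root rank :=
  isRank_of_parent parent rfl (by decide) (by decide)

end Node

theorem stmt4 :
    ∃ (X : Type) (le : X → X → Prop) (root : X) (ρ : X → ℕ),
      IsEvid le root ∧ IsRank le root ρ ∧
      ∃ z y : X, Strict le z y ∧ ρ z = 2 ∧ ρ y = 3 :=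
  ⟨Node, (· ≤ ·), .root, Node.rank, Node.isEvid, Node.isRank, .z, .y, by decide, rfl, rfl⟩

end Evid
end

section
/- Let X = {[0,0],[0,1],[1,0],[0,2],[1,1],[2,0]} with [h,i] ≼ [j,k] iff h ≥ j and i ≥ k (interpreting [m,n] as 'at least m heads and at least n tails in two coin tosses', with root ∅ = [0,0]). Then (X, ≼) is an evidential structure, but it contains no experimentation tree. -/
namespace Evid

variable {X : Type*}

def S11 : Set (ℕ × ℕ) := {(0,0), (0,1), (1,0), (0,2), (1,1), (2,0)}

def le11 : ↥S11 → ↥S11 → Prop :=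
  fun a b => b.val.1 ≤ a.val.1 ∧ b.val.2 ≤ a.val.2

def root11 : ↥S11 := ⟨(0,0), Set.mem_insert _ _⟩

instance : DecidablePred (· ∈ S11) := fun a => by unfold S11; infer_instance
instance : Fintype ↥S11 := by unfold S11; infer_instance
instance : DecidableRel le11 := fun a b => by unfold le11; infer_instance

lemma sum_lt_of_strict11 {x y : ↥S11} (h : Strict le11 x y) :
    y.val.1 + y.val.2 < x.val.1 + x.val.2 := by
  obtain ⟨⟨h1, h2⟩, h3⟩ := h
  rcases lt_or_ge y.val.1 x.val.1 with hlt | hge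
  · omega
  · have : x.val.1 = y.val.1 := le_antisymm hge h1
    rcases lt_or_ge y.val.2 x.val.2 with hlt2 | hge2
    · omega
    · exact absurd ⟨hge, hge2⟩ h3

instance (x y : ↥S11) : Decidable (Strict le11 x y) := by unfold Strict; infer_instance
instance (x y : ↥S11) : Decidable (Incompat le11 x y) := by unfold Incompat; infer_instance
instance (x y : ↥S11) : Decidable (Imm le11 x y) := by unfold Imm; infer_instance

lemma sum_le_two (x : ↥S11) : x.val.1 + x.val.2 ≤ 2 := by revert x; decide

lemma wf11 : ¬ ∃ f : ℕ → ↥S11, ∀ k, Strict le11 (f (k+1)) (f k) := by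
  rintro ⟨f, hf⟩
  have key : ∀ k, (f 0).val.1 + (f 0).val.2 + k ≤ (f k).val.1 + (f k).val.2 := by
    intro k
    induction k with
    | zero => omega
    | succ n ih => have := sum_lt_of_strict11 (hf n); omega
  have := key 3
  have := sum_le_two (f 3)
  have := sum_le_two (f 0)
  omega

lemma evid11 : IsEvid le11 root11 := by
  refine ⟨?_, ?_, wf11, ?_, ?_, ?_, ?_, ?_⟩
  · decide
  · decide
  · decide
  · decide
  · intro x z h
    revert x z; decide
  · intro x
    exact Set.toFinite _
  · intro x z h
    revert x z; decide

lemma step11 : ∀ x y z : ↥S11, Strict le11 x y → Strict le11 y z → z = root11 := by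
  decide

lemma no_pair11 : ∀ a b : ↥S11, Imm le11 a root11 → Imm le11 b root11 →
    ¬ Incompat le11 a b := by
  decide

theorem stmt11 :
    IsEvid le11 root11 ∧
    ¬ ∃ (T : Set ↥S11) (leT : ↥S11 → ↥S11 → Prop), IsTreeIn le11 root11 T leT := by
  refine ⟨evid11, ?_⟩
  rintro ⟨T, leT, h⟩
  -- there is a node of T other than the root
  have hx : ∃ x ∈ T, x ≠ root11 := by
    by_contra hc
    push_neg at hc
    apply h.nontriv
    ext u
    constructor
    · intro hu; exact hc u hu
    · intro hu; rw [Set.mem_singleton_iff] at hu; rw [hu]; exact h.root_mem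
  obtain ⟨x, hxT, hxr⟩ := hx
  -- climb to find a strict leT-predecessor of the root
  have hw : ∃ w, Strict leT w root11 := by
    obtain ⟨y, hy, -⟩ := h.unique_succ x hxT hxr
    have hyle : Strict le11 x y := (h.imm_imm _ _ hy).1
    have hyT : y ∈ T := (h.sub x y hy.1.1).2.2
    by_cases hyr : y = root11
    · exact ⟨x, hyr ▸ hy.1⟩
    · obtain ⟨z, hz, -⟩ := h.unique_succ y hyT hyr
      have hzle : Strict le11 y z := (h.imm_imm _ _ hz).1
      have hzr : z = root11 := step11 x y z hyle hzle
      exact ⟨y, hzr ▸ hz.1⟩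
  obtain ⟨a, b, ha, hb, hab⟩ := h.fork root11 h.root_mem hw
  exact no_pair11 a b (h.imm_imm _ _ ha) (h.imm_imm _ _ hb)
    (h.pred_incompat root11 a b ha hb hab)

end Evid
end

section
/- Let (X, ≼) be an experimentation tree with canonical sample space (Ω, T), canonical embedding e, and rank function ρ. Define Π_n = {e(x) | ρ(x) = n, or (ρ(x) < n and x is maximally specific)}. Then each Π_n is a finite partition of Ω, Π_{n+1} refines Π_n, e(X) = ⋃_n Π_n, and ⋃_n (field generated by Π_n) equals the field of clopen subsets of Ω. -/
namespace Evid

variable {X : Type*}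

section Lemmas

variable {le : X → X → Prop} {root : X} {ρ : X → ℕ}

lemma le_root (h : IsExpTree le root) (x : X) : le x root := by
  by_cases hx : x = root
  · subst hx; exact h.1.refl _
  · exact (h.1.root_top x hx).1

lemma chainspec_root : ChainSpec le root root 0 := Or.inl ⟨rfl, rfl⟩

lemma rho_root (hρ : IsRank le root ρ) : ρ root = 0 :=
  Nat.le_zero.mp ((hρ root).2 0 chainspec_root)

lemma eq_root_of_chain0 {x : X} (h : ChainSpec le root x 0) : x = root := by
  rcases h with ⟨h, _⟩ | ⟨g, h0, hn, _⟩
  · exact h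
  · rw [← h0, hn]

lemma eq_root_of_rho_zero (hρ : IsRank le root ρ) {x : X} (h : ρ x = 0) : x = root :=
  eq_root_of_chain0 (h ▸ (hρ x).1)

lemma equiv_imm_left (h : IsExpTree le root) {x y w : X} (hxy : le x y) (hyx : le y x)
    (hw : Imm le x w) : Imm le y w := by
  obtain ⟨⟨hxw, hwx⟩, hint⟩ := hw
  refine ⟨⟨h.1.trans _ _ _ hyx hxw, fun hwy => hwx (h.1.trans _ _ _ hwy hyx)⟩, ?_⟩
  rintro ⟨u, ⟨hyu, huy⟩, hu⟩
  exact hint ⟨u, ⟨h.1.trans _ _ _ hxy hyu, fun hux => huy (h.1.trans _ _ _ hux hxy)⟩, hu⟩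

lemma chain_equiv (h : IsExpTree le root) {x y : X} (hxy : le x y) (hyx : le y x)
    {n : ℕ} (hc : ChainSpec le root x n) : ChainSpec le root y n := by
  have hrooteq : x = root → y = root := by
    intro hx; subst hx
    by_contra hy
    exact (h.1.root_top y hy).2 hxy
  rcases hc with ⟨h0, hn⟩ | ⟨g, h0, hn, hstep⟩
  · exact Or.inl ⟨hrooteq h0, hn⟩
  · rcases Nat.eq_zero_or_pos n with hn0 | hnpos
    · subst hn0
      exact Or.inl ⟨hrooteq (h0.symm.trans hn), rfl⟩
    · refine Or.inr ⟨fun k => if k = 0 then y else g k, by simp, ?_, ?_⟩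
      · simp [Nat.pos_iff_ne_zero.mp hnpos, hn]
      · intro k hk
        rcases Nat.eq_zero_or_pos k with hk0 | hkpos
        · subst hk0
          simp only [if_pos rfl, if_neg one_ne_zero]
          exact equiv_imm_left h hxy hyx (h0 ▸ hstep 0 hnpos)
        · simp only [if_neg (Nat.pos_iff_ne_zero.mp hkpos), if_neg (Nat.succ_ne_zero k)]
          exact hstep k hk

lemma rho_equiv (h : IsExpTree le root) (hρ : IsRank le root ρ) {x y : X}
    (hxy : le x y) (hyx : le y x) : ρ x = ρ y :=
  le_antisymm ((hρ x).2 _ (chain_equiv h hyx hxy (hρ y).1))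
    ((hρ y).2 _ (chain_equiv h hxy hyx (hρ x).1))

lemma chain_prepend {x y : X} (hyx : Imm le y x) {n : ℕ}
    (hc : ChainSpec le root x n) : ChainSpec le root y (n + 1) := by
  rcases hc with ⟨h0, hn⟩ | ⟨g, h0, hn, hstep⟩
  · subst hn
    refine Or.inr ⟨fun k => if k = 0 then y else root, by simp, by simp, ?_⟩
    intro k hk
    interval_cases k
    simpa [h0] using hyx
  · refine Or.inr ⟨fun k => if k = 0 then y else g (k - 1), by simp, by simp [hn], ?_⟩
    intro k hk
    rcases Nat.eq_zero_or_pos k with hk0 | hkpos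
    · subst hk0
      simpa [h0] using hyx
    · simp only [if_neg (Nat.pos_iff_ne_zero.mp hkpos), if_neg (Nat.succ_ne_zero k)]
      obtain ⟨k, rfl⟩ := Nat.exists_eq_add_of_lt hkpos
      simpa using hstep k (by omega)

lemma rho_imm_le (hρ : IsRank le root ρ) {x y : X} (hyx : Imm le y x) :
    ρ y ≤ ρ x + 1 :=
  (hρ y).2 _ (chain_prepend hyx (hρ x).1)

lemma succ_spec (h : IsExpTree le root) (hρ : IsRank le root ρ) {x : X} (hx : x ≠ root) :
    ∃ x', Imm le x x' ∧ (∀ w, Imm le x w → w = x') ∧ ρ x = ρ x' + 1 := by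
  obtain ⟨x', hx', huniq⟩ := h.2.1 x hx
  have hne0 : ρ x ≠ 0 := fun h0 => hx (eq_root_of_rho_zero hρ h0)
  obtain ⟨m, hm⟩ : ∃ m, ρ x = m + 1 := ⟨ρ x - 1, by omega⟩
  obtain ⟨g, h0, hn, hstep⟩ : ∃ g : ℕ → X, g 0 = x ∧ g (ρ x) = root ∧
      ∀ k < ρ x, Imm le (g k) (g (k+1)) := by
    rcases (hρ x).1 with ⟨h0, _⟩ | hg
    · exact absurd h0 hx
    · exact hg
  have hg1 : g 1 = x' := huniq _ (h0 ▸ hstep 0 (by omega))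
  have hchain : ChainSpec le root x' m :=
    Or.inr ⟨fun k => g (k + 1), hg1, by show g (m+1) = root; rw [← hm]; exact hn, fun k hk => hstep (k+1) (by omega)⟩
  have h1 : ρ x' ≤ m := (hρ x').2 _ hchain
  have h2 : ρ x ≤ ρ x' + 1 := rho_imm_le hρ hx'
  exact ⟨x', hx', fun w hw => huniq w hw, by omega⟩


lemma rho_lt_of_strict (h : IsExpTree le root) (hρ : IsRank le root ρ) :
    ∀ {x y : X}, Strict le x y → ρ y < ρ x := by
  have main : ∀ n : ℕ, ∀ x y : X, ρ x ≤ n → Strict le x y → ρ y < ρ x := by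
    intro n
    induction n with
    | zero =>
      intro x y hn ⟨hxy, hyx⟩
      exact absurd (eq_root_of_rho_zero hρ (Nat.le_zero.mp hn) ▸ le_root h y) hyx
    | succ n ih =>
      intro x y hn ⟨hxy, hyx⟩
      have hx : x ≠ root := by
        rintro rfl
        exact hyx (le_root h y)
      obtain ⟨x', himm, huniq, hrho⟩ := succ_spec h hρ hx
      obtain ⟨w, hw, hwy⟩ := h.1.interp x y ⟨hxy, hyx⟩
      have hwx' : w = x' := huniq w hw
      rw [hwx'] at hwy
      by_cases hyx' : le y x'
      · have := rho_equiv h hρ hwy hyx'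
        omega
      · have : ρ y < ρ x' := ih x' y (by omega) ⟨hwy, hyx'⟩
        omega
  intro x y hs
  exact main (ρ x) x y le_rfl hs

lemma rho_le_of_le (h : IsExpTree le root) (hρ : IsRank le root ρ) {x y : X}
    (hxy : le x y) : ρ y ≤ ρ x := by
  by_cases hyx : le y x
  · exact (rho_equiv h hρ hxy hyx).ge
  · exact (rho_lt_of_strict h hρ ⟨hxy, hyx⟩).le

lemma comparable (h : IsExpTree le root) (hρ : IsRank le root ρ) :
    ∀ {z x y : X}, le z x → le z y → le x y ∨ le y x := by
  have main : ∀ n : ℕ, ∀ z x y : X, ρ z ≤ n → le z x → le z y → le x y ∨ le y x := by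
    intro n
    induction n with
    | zero =>
      intro z x y hn hzx hzy
      have hz : z = root := eq_root_of_rho_zero hρ (Nat.le_zero.mp hn)
      subst hz
      left
      exact h.1.trans _ _ _ (le_root h x) hzy
    | succ n ih =>
      intro z x y hn hzx hzy
      by_cases hxz : le x z
      · exact Or.inl (h.1.trans _ _ _ hxz hzy)
      by_cases hyz : le y z
      · exact Or.inr (h.1.trans _ _ _ hyz hzx)
      have hz : z ≠ root := by
        rintro rfl
        exact hxz (le_root h x)
      obtain ⟨z', himm, huniq, hrho⟩ := succ_spec h hρ hz
      obtain ⟨w1, hw1, hw1x⟩ := h.1.interp z x ⟨hzx, hxz⟩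
      obtain ⟨w2, hw2, hw2y⟩ := h.1.interp z y ⟨hzy, hyz⟩
      rw [huniq w1 hw1] at hw1x
      rw [huniq w2 hw2] at hw2y
      exact ih z' x y (by omega) hw1x hw2y
  intro z x y hzx hzy
  exact main (ρ z) z x y le_rfl hzx hzy

lemma equiv_imm_right (h : IsExpTree le root) {w y z : X} (hyz : le y z) (hzy : le z y)
    (hw : Imm le w y) : Imm le w z := by
  obtain ⟨⟨hwy, hyw⟩, hint⟩ := hw
  refine ⟨⟨h.1.trans _ _ _ hwy hyz, fun hzw => hyw (h.1.trans _ _ _ hyz hzw)⟩, ?_⟩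
  rintro ⟨u, hu1, hu2⟩
  exact hint ⟨u, hu1, ⟨h.1.trans _ _ _ hu2.1 hzy, fun hyu => hu2.2 (h.1.trans _ _ _ hzy hyu)⟩⟩

lemma below_imm (h : IsExpTree le root) (hρ : IsRank le root ρ) :
    ∀ {w z : X}, Strict le w z → ∃ x, le w x ∧ Imm le x z := by
  have main : ∀ n : ℕ, ∀ w z : X, ρ w ≤ n → Strict le w z → ∃ x, le w x ∧ Imm le x z := by
    intro n
    induction n with
    | zero =>
      intro w z hn hs
      have := eq_root_of_rho_zero hρ (Nat.le_zero.mp hn)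
      subst this
      exact absurd (le_root h z) hs.2
    | succ n ih =>
      intro w z hn hs
      obtain ⟨y, hy, hyz⟩ := h.1.interp w z hs
      by_cases hzy : le z y
      · exact ⟨w, h.1.refl w, equiv_imm_right h hyz hzy hy⟩
      · have hrank : ρ y < ρ w := rho_lt_of_strict h hρ hy.1
        obtain ⟨x, hyx, hxz⟩ := ih y z (by omega) ⟨hyz, hzy⟩
        exact ⟨x, h.1.trans _ _ _ hy.1.1 hyx, hxz⟩
  intro w z hs
  exact main (ρ w) w z le_rfl hs

lemma rho_imm_eq (h : IsExpTree le root) (hρ : IsRank le root ρ) {x y : X}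
    (hyx : Imm le y x) : ρ y = ρ x + 1 := by
  have h1 := rho_imm_le hρ hyx
  have h2 := rho_lt_of_strict h hρ hyx.1
  omega

lemma level_finite (h : IsExpTree le root) (hρ : IsRank le root ρ) (n : ℕ) :
    {x : X | ρ x ≤ n}.Finite := by
  induction n with
  | zero =>
    refine Set.Finite.subset (Set.finite_singleton root) ?_
    intro x hx
    exact eq_root_of_rho_zero hρ (Nat.le_zero.mp hx)
  | succ n ih =>
    refine Set.Finite.subset (ih.union (Set.Finite.biUnion ih
      (fun y _ => h.1.finBranch y))) ?_
    intro x hx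
    have hx' : ρ x ≤ n + 1 := hx
    by_cases hxn : ρ x ≤ n
    · exact Or.inl hxn
    · have hx1 : ρ x = n + 1 := by omega
      have hxr : x ≠ root := by
        intro hr
        rw [hr, rho_root hρ] at hx1
        omega
      obtain ⟨x', himm, _, hrho⟩ := succ_spec h hρ hxr
      exact Or.inr (Set.mem_biUnion (show ρ x' ≤ n by omega) himm)

end Lemmas

section Topo

variable {Ω : Type*} [TopologicalSpace Ω] {e : X → Set Ω}

lemma comp_of_meet (h : IsExpTree le root) (hρ : IsRank le root ρ)
    (hdisj : ∀ x y, Incompat le x y ↔ e x ∩ e y = ∅) {x y : X}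
    (hxy : (e x ∩ e y).Nonempty) : le x y ∨ le y x := by
  have : ¬ Incompat le x y := fun hI => by
    rw [hdisj] at hI
    rw [hI] at hxy
    exact Set.not_nonempty_empty hxy
  obtain ⟨z, hzx, hzy⟩ := not_not.mp this
  exact comparable h hρ hzx hzy

lemma maxspec_clopen (h : IsExpTree le root)
    (hbase : ∀ U : Set Ω, IsOpen U → U.Nonempty → ∃ x, e x ⊆ U)
    (hmono : ∀ x y, le x y ↔ e x ⊆ e y) {x : X} (hx : MaxSpec le x)
    {s : Set Ω} (hs : IsOpen s) (hxs : (e x ∩ s).Nonempty)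
    (hclopen : ∀ x, IsClopen (e x)) : e x ⊆ s := by
  obtain ⟨y, hy⟩ := hbase (e x ∩ s) ((hclopen x).isOpen.inter hs) hxs
  have hyx : le y x := (hmono y x).mpr (hy.trans Set.inter_subset_left)
  by_cases hxy : le x y
  · exact ((hmono x y).mp hxy).trans (hy.trans Set.inter_subset_right)
  · exact absurd ⟨y, hyx, hxy⟩ hx

lemma cover (h : IsExpTree le root) (hρ : IsRank le root ρ)
    (hclopen : ∀ x, IsClopen (e x)) (hne : ∀ x, (e x).Nonempty)
    (hbase : ∀ U : Set Ω, IsOpen U → U.Nonempty → ∃ x, e x ⊆ U)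
    (hmono : ∀ x y, le x y ↔ e x ⊆ e y) {z : X} (hz : ¬ MaxSpec le z) :
    e z = ⋃ x ∈ {w | Imm le w z}, e x := by
  have hUnion : IsClopen (⋃ x ∈ {w | Imm le w z}, e x) :=
    (h.1.finBranch z).isClopen_biUnion fun x _ => hclopen x
  have key : e z \ ⋃ x ∈ {w | Imm le w z}, e x = ∅ := by
    by_contra hUne
    obtain ⟨w, hw⟩ := hbase _ ((hclopen z).isOpen.sdiff hUnion.isClosed)
      (Set.nonempty_iff_ne_empty.mpr hUne)
    have hwz : le w z := (hmono w z).mpr (hw.trans Set.diff_subset)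
    have hnot : ¬ le z w := by
      intro hzw
      obtain ⟨v, hv⟩ := not_not.mp hz
      obtain ⟨p, _, hp⟩ := below_imm h hρ hv
      obtain ⟨ω, hω⟩ := hne p
      have h1 : ω ∈ e z := (hmono p z).mp hp.1.1 hω
      have h2 : ω ∈ e w := (hmono z w).mp hzw h1
      exact (hw h2).2 (Set.mem_biUnion hp hω)
    obtain ⟨x, hwx, hxz⟩ := below_imm h hρ ⟨hwz, hnot⟩
    obtain ⟨ω, hω⟩ := hne w
    exact (hw hω).2 (Set.mem_biUnion hxz ((hmono w x).mp hwx hω))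
  refine subset_antisymm (Set.diff_eq_empty.mp key) ?_
  exact Set.iUnion₂_subset fun x hx => (hmono x z).mp hx.1.1

lemma cell_exists (h : IsExpTree le root) (hρ : IsRank le root ρ)
    (hclopen : ∀ x, IsClopen (e x)) (hne : ∀ x, (e x).Nonempty)
    (hbase : ∀ U : Set Ω, IsOpen U → U.Nonempty → ∃ x, e x ⊆ U)
    (hroot : e root = Set.univ)
    (hmono : ∀ x y, le x y ↔ e x ⊆ e y) (n : ℕ) (ω : Ω) :
    ∃ x, (ρ x = n ∨ (ρ x < n ∧ MaxSpec le x)) ∧ ω ∈ e x := by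
  induction n with
  | zero =>
    exact ⟨root, Or.inl (rho_root hρ), hroot ▸ Set.mem_univ ω⟩
  | succ n ih =>
    obtain ⟨x, hx, hωx⟩ := ih
    by_cases hmax : MaxSpec le x
    · refine ⟨x, Or.inr ⟨?_, hmax⟩, hωx⟩
      rcases hx with hx | hx
      · omega
      · omega
    · have hxn : ρ x = n := by
        rcases hx with hx | hx
        · exact hx
        · exact absurd hx.2 hmax
      have := cover h hρ hclopen hne hbase hmono hmax
      rw [this] at hωx
      obtain ⟨y, hy, hωy⟩ := Set.mem_iUnion₂.mp hωx
      exact ⟨y, Or.inl (by rw [rho_imm_eq h hρ hy, hxn]), hωy⟩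


lemma clopen_level (h : IsExpTree le root) (hρ : IsRank le root ρ)
    (hclopen : ∀ x, IsClopen (e x)) (hne : ∀ x, (e x).Nonempty)
    (hbase : ∀ U : Set Ω, IsOpen U → U.Nonempty → ∃ x, e x ⊆ U)
    (hmono : ∀ x y, le x y ↔ e x ⊆ e y)
    {s : Set Ω} (hs : IsClopen s) :
    ∃ n, ∀ x, (ρ x = n ∨ (ρ x < n ∧ MaxSpec le x)) →
      e x ⊆ s ∨ e x ∩ s = ∅ := by
  by_contra hcon
  push_neg at hcon
  -- at every level there is a straddling cell
  set Str : X → Prop := fun x => (e x ∩ s).Nonempty ∧ (e x ∩ sᶜ).Nonempty with hStr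
  have hstr_not_max : ∀ x, Str x → ¬ MaxSpec le x := by
    intro x hx hmax
    have hsub : e x ⊆ s := maxspec_clopen h hbase hmono hmax hs.isOpen hx.1 hclopen
    obtain ⟨ω, hω1, hω2⟩ := hx.2
    exact hω2 (hsub hω1)
  have hup : ∀ x y, le x y → Str x → Str y := by
    intro x y hxy ⟨h1, h2⟩
    have hsub := (hmono x y).mp hxy
    exact ⟨h1.mono (Set.inter_subset_inter_left _ hsub),
      h2.mono (Set.inter_subset_inter_left _ hsub)⟩
  have H : ∀ n, ∃ x, ρ x = n ∧ Str x := by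
    intro n
    obtain ⟨x, hx, hxs, hxs'⟩ := hcon n
    have hstrx : Str x := by
      refine ⟨hxs', ?_⟩
      obtain ⟨ω, hω1, hω2⟩ := Set.not_subset.mp hxs
      exact ⟨ω, hω1, hω2⟩
    rcases hx with hx | hx
    · exact ⟨x, hx, hstrx⟩
    · exact absurd hstrx.2 (by simpa [Str] using
        fun hh => (hstr_not_max x hstrx hx.2).elim)
  -- extendable straddlers
  set Ext : X → Prop := fun x => Str x ∧ ∀ m, ∃ y, le y x ∧ m ≤ ρ y ∧ Str y with hExt
  have hExtRoot : Ext root := by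
    obtain ⟨x0, hx0, hstr0⟩ := H 0
    have : x0 = root := eq_root_of_rho_zero hρ hx0
    refine ⟨this ▸ hstr0, fun m => ?_⟩
    obtain ⟨y, hy, hstry⟩ := H m
    exact ⟨y, le_root h y, hy.ge, hstry⟩
  have step : ∀ x, Ext x → ∃ x', Strict le x' x ∧ Ext x' := by
    intro x hx
    have hyall : ∀ m : ℕ, ∃ y, le y x ∧ m + ρ x + 1 ≤ ρ y ∧ Str y := fun m => hx.2 _
    choose y hy1 hy2 hy3 using hyall
    have hstricty : ∀ m, Strict le (y m) x := by
      intro m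
      refine ⟨hy1 m, fun hxy => ?_⟩
      have := rho_le_of_le h hρ hxy
      have := hy2 m
      omega
    have hbelow : ∀ m, ∃ p, le (y m) p ∧ Imm le p x :=
      fun m => below_imm h hρ (hstricty m)
    choose p hp1 hp2 using hbelow
    haveI : Finite {w // Imm le w x} := (h.1.finBranch x).to_subtype
    obtain ⟨⟨q, hq⟩, hfib⟩ :=
      Finite.exists_infinite_fiber (fun m => (⟨p m, hp2 m⟩ : {w // Imm le w x}))
    have hinf : {m | p m = q}.Infinite := by
      have := Set.infinite_coe_iff.mp hfib
      refine this.mono ?_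
      intro m hm
      simpa using congrArg Subtype.val hm
    obtain ⟨m0, hm0⟩ := hinf.nonempty
    refine ⟨q, hq.1, ?_, ?_⟩
    · exact hup _ _ (hm0 ▸ hp1 m0) (hy3 m0)
    · intro m
      obtain ⟨m', hm', hmm'⟩ := hinf.exists_gt m
      refine ⟨y m', hm' ▸ hp1 m', ?_, hy3 m'⟩
      have := hy2 m'
      omega
  -- build an infinite descending chain, contradicting well-foundedness
  have step' : ∀ z : {x // Ext x}, ∃ z' : {x // Ext x}, Strict le z'.1 z.1 := by
    rintro ⟨x, hx⟩
    obtain ⟨x', hs', he'⟩ := step x hx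
    exact ⟨⟨x', he'⟩, hs'⟩
  choose g hg using step'
  refine h.1.wf ⟨fun n => (g^[n] ⟨root, hExtRoot⟩).1, fun k => ?_⟩
  show Strict le (g^[k+1] ⟨root, hExtRoot⟩).1 (g^[k] ⟨root, hExtRoot⟩).1
  rw [Function.iterate_succ_apply']
  exact hg _

end Topo



theorem stmt14 {X : Type*} (le : X → X → Prop) (root : X) (hT : IsExpTree le root)
    {Ω : Type*} [TopologicalSpace Ω] [CompactSpace Ω] (e : X → Set Ω)
    (hclopen : ∀ x, IsClopen (e x)) (hne : ∀ x, (e x).Nonempty)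
    (hbase : ∀ U : Set Ω, IsOpen U → U.Nonempty → ∃ x, e x ⊆ U)
    (hroot : e root = Set.univ)
    (hmono : ∀ x y, le x y ↔ e x ⊆ e y)
    (hdisj : ∀ x y, Incompat le x y ↔ e x ∩ e y = ∅)
    (ρ : X → ℕ) (hρ : IsRank le root ρ) :
    let Pi : ℕ → Set (Set Ω) := fun n =>
      {s | ∃ x, (ρ x = n ∨ (ρ x < n ∧ MaxSpec le x)) ∧ s = e x}
    (∀ n, (Pi n).Finite) ∧
    (∀ n, (∀ s ∈ Pi n, s.Nonempty) ∧
      (∀ s ∈ Pi n, ∀ t ∈ Pi n, s ≠ t → s ∩ t = ∅) ∧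
      ⋃₀ Pi n = Set.univ) ∧
    (∀ n, ∀ s ∈ Pi (n+1), ∃ t ∈ Pi n, s ⊆ t) ∧
    (Set.range e = ⋃ n, Pi n) ∧
    ({s : Set Ω | IsClopen s} =
      {s | ∃ (n : ℕ) (F : Set (Set Ω)), F ⊆ Pi n ∧ s = ⋃₀ F}) := by
  intro Pi
  have hPiFin : ∀ n, (Pi n).Finite := by
    intro n
    refine Set.Finite.subset ((level_finite hT hρ n).image e) ?_
    rintro s ⟨x, hx, rfl⟩
    exact ⟨x, by rcases hx with hx | hx <;> [exact hx.le; exact hx.1.le], rfl⟩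
  have hkey : ∀ n x y, (ρ x = n ∨ (ρ x < n ∧ MaxSpec le x)) →
      (ρ y = n ∨ (ρ y < n ∧ MaxSpec le y)) → Strict le x y → False := by
    intro n x y hx hy hs
    have h1 : ρ y < ρ x := rho_lt_of_strict hT hρ hs
    have h2 : ¬ MaxSpec le y := fun hm => hm ⟨x, hs⟩
    have h3 : ρ y = n := by
      rcases hy with hy | hy
      · exact hy
      · exact absurd hy.2 h2
    rcases hx with hx | hx <;> omega
  have hcover : ∀ n, ⋃₀ Pi n = Set.univ := by
    intro n
    refine Set.eq_univ_of_forall fun ω => ?_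
    obtain ⟨x, hx, hωx⟩ := cell_exists hT hρ hclopen hne hbase hroot hmono n ω
    exact ⟨e x, ⟨x, hx, rfl⟩, hωx⟩
  refine ⟨hPiFin, ?_, ?_, ?_, ?_⟩
  · intro n
    refine ⟨?_, ?_, hcover n⟩
    · rintro s ⟨x, _, rfl⟩
      exact hne x
    · rintro s ⟨x, hx, rfl⟩ t ⟨y, hy, rfl⟩ hst
      by_contra hmeet
      have hnonempty : (e x ∩ e y).Nonempty := Set.nonempty_iff_ne_empty.mpr hmeet
      rcases comp_of_meet hT hρ hdisj hnonempty with hxy | hyx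
      · by_cases hyx : le y x
        · exact hst (subset_antisymm ((hmono x y).mp hxy) ((hmono y x).mp hyx))
        · exact hkey n x y hx hy ⟨hxy, hyx⟩
      · by_cases hxy : le x y
        · exact hst (subset_antisymm ((hmono x y).mp hxy) ((hmono y x).mp hyx))
        · exact hkey n y x hy hx ⟨hyx, hxy⟩
  · rintro n s ⟨x, hx, rfl⟩
    rcases hx with hx | hx
    · have hxr : x ≠ root := by
        intro hr
        rw [hr, rho_root hρ] at hx
        omega
      obtain ⟨x', himm, _, hrho⟩ := succ_spec hT hρ hxr
      exact ⟨e x', ⟨x', Or.inl (by omega), rfl⟩, (hmono x x').mp himm.1.1⟩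
    · by_cases hxn : ρ x = n
      · exact ⟨e x, ⟨x, Or.inl hxn, rfl⟩, subset_rfl⟩
      · exact ⟨e x, ⟨x, Or.inr ⟨by omega, hx.2⟩, rfl⟩, subset_rfl⟩
  · ext s
    constructor
    · rintro ⟨x, rfl⟩
      exact Set.mem_iUnion.mpr ⟨ρ x, x, Or.inl rfl, rfl⟩
    · intro hs
      obtain ⟨n, x, _, rfl⟩ := Set.mem_iUnion.mp hs
      exact ⟨x, rfl⟩
  · ext s
    simp only [Set.mem_setOf_eq]
    constructor
    · intro hs
      obtain ⟨n, hn⟩ := clopen_level hT hρ hclopen hne hbase hmono hs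
      refine ⟨n, {t | t ∈ Pi n ∧ t ⊆ s}, fun t ht => ht.1, ?_⟩
      refine subset_antisymm ?_ ?_
      · intro ω hω
        obtain ⟨x, hx, hωx⟩ := cell_exists hT hρ hclopen hne hbase hroot hmono n ω
        rcases hn x hx with hsub | hdis
        · exact ⟨e x, ⟨⟨x, hx, rfl⟩, hsub⟩, hωx⟩
        · exact absurd (Set.mem_inter hωx hω) (hdis ▸ Set.notMem_empty ω)
      · exact Set.sUnion_subset fun t ht => ht.2
    · rintro ⟨n, F, hF, rfl⟩
      rw [Set.sUnion_eq_biUnion]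
      refine ((hPiFin n).subset hF).isClopen_biUnion fun t ht => ?_
      obtain ⟨x, _, rfl⟩ := hF ht
      exact hclopen x


end Evid
end

section
/- There exists an evidential structure (X, ≼), a set A of two alternatives, and a plan ζ : X → A that is SCEU-rational (rationalized by a subjective-conditional-expected-utility-representable conditional preference relation) but not ISD consistent. Specifically, take X = {∅, x₁, x₂, x₃, z₁, ..., z₅} with ⋖ comprising (z_i, x_i), (z₄, x_i), (z₅, x_i) for i = 1,2,3 and (x_i, ∅), ≼ its reflexive-transitive closure, A = {a, b}, ζ(∅) = ζ(z₁) = ζ(z₂) = ζ(z₃) = a and ζ(x₁) = ζ(x₂) = ζ(x₃) = ζ(z₄) = ζ(z₅) = b. -/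
namespace Evid

variable {X : Type*}

/-- A plan on domain `Z` is ISD consistent. -/
def ISDPlan {X A : Type*} (le : X → X → Prop) (Z : Set X) (ζ : X → A) : Prop :=
  ∀ (a : A) (z : X), z ∈ Z → {x | Imm le x z}.Nonempty →
    (∀ x, Imm le x z → x ∈ Z ∧ ζ x = a) → ζ z = a

/-- `R` is a conditional preference relation: each `R x` is a total preorder on `A`. -/
def CondPref {X A : Type*} (R : X → A → A → Prop) : Prop :=
  ∀ x, (∀ a b, R x a b ∨ R x b a) ∧ (∀ a b c, R x a b → R x b c → R x a c)

/-- Strict part of the conditional preference at `x`. -/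
def PStrict {X A : Type*} (R : X → A → A → Prop) (x : X) (a b : A) : Prop :=
  R x a b ∧ ¬ R x b a

/-- ISD consistency of a conditional preference relation. -/
def ISDPref {X A : Type*} (le : X → X → Prop) (R : X → A → A → Prop) : Prop :=
  ∀ z a b, {x | Imm le x z}.Nonempty →
    (∀ x, Imm le x z → PStrict R x a b) → PStrict R z a b

/-- `R` rationalizes the plan `ζ` on `Z`. -/
def Rationalizes {X A : Type*} (R : X → A → A → Prop) (Z : Set X) (ζ : X → A) : Prop :=
  ∀ x ∈ Z, ∀ a, a ≠ ζ x → PStrict R x a (ζ x)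

/-- The plan `ζ` (on all of `X`) is SCEU-rational with respect to `(X, le)`. -/
def SCEURational {X A : Type*} (le : X → X → Prop) (root : X) (ζ : X → A) : Prop :=
  ∃ (Φ : Type) (m : MeasurableSpace Φ) (c : X → Set Φ)
    (Pr : @MeasureTheory.Measure Φ m) (f : A → Φ → ℝ),
    MeasureTheory.IsProbabilityMeasure Pr ∧
    (∀ x, @MeasurableSet Φ m (c x) ∧ (c x).Nonempty) ∧
    c root = Set.univ ∧
    (∀ x y, le x y ↔ c x ⊆ c y) ∧
    (∀ x y, Incompat le x y → c x ∩ c y = ∅) ∧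
    (∀ z, {x | Imm le x z}.Nonempty → c z = ⋃ x ∈ {x | Imm le x z}, c x) ∧
    (∀ a, @Measurable Φ ℝ m _ (f a) ∧ ∃ M, ∀ φ, |f a φ| ≤ M) ∧
    ∀ (x : X) (a : A), a ≠ ζ x →
      (∫ φ in c x, f a φ ∂Pr) < ∫ φ in c x, f (ζ x) φ ∂Pr


/-!
At the root the plan picks `a`, although each of its three immediate refinements `x i` picks
`b`, so ISD consistency fails there. Rationalize it with five equally likely states,
`f a = 1_{0,1,2}` and `f b = 1_{3,4}`: every `x i = {i, 3, 4}` holds two `b`-states and one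
`a`-state, while the root holds three `a`-states and two `b`-states. Because the events `x i`
overlap in `{3, 4}`, conditional expected utilities need not aggregate from them to the root.
-/

open MeasureTheory

section Decidable

variable {X : Type*} {le : X → X → Prop} [DecidableRel le]

instance : DecidableRel (Strict le) := fun x y =>
  inferInstanceAs (Decidable (le x y ∧ ¬ le y x))

variable [Fintype X]

instance : DecidableRel (Imm le) := fun x y =>
  inferInstanceAs (Decidable (Strict le x y ∧ ¬ ∃ w, Strict le x w ∧ Strict le w y))

instance : DecidableRel (Incompat le) := fun x y =>
  inferInstanceAs (Decidable (¬ ∃ z, le z x ∧ le z y))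

end Decidable

theorem not_isdPlan_univ_of {X A : Type*} {le : X → X → Prop} {ζ : X → A} (z : X) (a : A)
    (hz : ∃ x, Imm le x z) (hpred : ∀ x, Imm le x z → ζ x = a) (ha : ζ z ≠ a) :
    ¬ ISDPlan le Set.univ ζ :=
  fun isd => ha (isd a z trivial hz fun x hx => ⟨trivial, hpred x hx⟩)

theorem not_exists_strictAnti_subset {X Φ : Type*} (c : X → Finset Φ) :
    ¬ ∃ f : ℕ → X, ∀ k, Strict (fun x y => c x ⊆ c y) (f (k + 1)) (f k) := by
  rintro ⟨f, hf⟩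
  obtain ⟨k, hk⟩ := WellFounded.not_rel_apply_succ (r := (· ⊂ ·)) (c ∘ f)
  exact hk (hf k)

theorem isEvid_of_subset {X Φ : Type*} [Finite X] (c : X → Finset Φ) (root : X)
    (root_top : ∀ x, x ≠ root → c x ⊂ c root) (nontriv : ∃ x, x ≠ root)
    (interp : ∀ x z, c x ⊂ c z → ∃ y, Imm (fun x y => c x ⊆ c y) x y ∧ c y ⊆ c z)
    (incompat_wit : ∀ x z, ¬ c x ⊆ c z →
      ∃ y, c y ⊆ c x ∧ Incompat (fun x y => c x ⊆ c y) y z) :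
    IsEvid (fun x y => c x ⊆ c y) root where
  refl _ := subset_rfl
  trans _ _ _ := subset_trans
  wf := not_exists_strictAnti_subset c
  root_top := root_top
  nontriv := nontriv
  interp := interp
  finBranch _ := Set.toFinite _
  incompat_wit := incompat_wit

theorem setIntegral_indicator_one_uniformOfFintype {Φ : Type*} [Fintype Φ] [DecidableEq Φ]
    [Nonempty Φ] [MeasurableSpace Φ] [DiscreteMeasurableSpace Φ] (s t : Finset Φ) :
    ∫ φ in (s : Set Φ), (t : Set Φ).indicator (1 : Φ → ℝ) φ ∂(PMF.uniformOfFintype Φ).toMeasure =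
      (s ∩ t).card / Fintype.card Φ := by
  rw [setIntegral_indicator (Finset.measurableSet _), ← Finset.coe_inter]
  simp only [Pi.one_apply]
  rw [setIntegral_const, measureReal_def,
    PMF.toMeasure_uniformOfFintype_apply _ (Finset.measurableSet _)]
  simp [Finset.filter_mem_eq_inter, Finset.inter_comm]

/-- The rationalization uses the uniform prior and the utilities `f a = 1_{u a}`, so the
conditional expected utility of `a` at `x` is `#(c x ∩ u a) / #Φ`. -/
theorem sceuRational_of_subset {X A : Type*} {Φ : Type} [Fintype Φ] [DecidableEq Φ]
    [MeasurableSpace Φ] [DiscreteMeasurableSpace Φ] (c : X → Finset Φ) (root : X) (ζ : X → A)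
    (u : A → Finset Φ) (nonempty : ∀ x, (c x).Nonempty) (root_eq : c root = Finset.univ)
    (incompat_disjoint : ∀ x y, Incompat (fun x y => c x ⊆ c y) x y → Disjoint (c x) (c y))
    (cover : ∀ z, (∃ x, Imm (fun x y => c x ⊆ c y) x z) →
      ∀ φ ∈ c z, ∃ x, Imm (fun x y => c x ⊆ c y) x z ∧ φ ∈ c x)
    (prefers : ∀ x a, a ≠ ζ x → (c x ∩ u a).card < (c x ∩ u (ζ x)).card) :
    SCEURational (fun x y => c x ⊆ c y) root ζ := by
  have : Nonempty Φ := (nonempty root).to_type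
  refine ⟨Φ, inferInstance, fun x => c x, (PMF.uniformOfFintype Φ).toMeasure,
    fun a => (u a : Set Φ).indicator 1, inferInstance, fun x => ?_, by simp [root_eq],
    fun _ _ => Finset.coe_subset.symm, fun x y h => ?_, fun z hz => ?_, fun a => ?_,
    fun x a h => ?_⟩
  · exact ⟨(c x).measurableSet, Finset.coe_nonempty.2 (nonempty x)⟩
  · exact Set.disjoint_iff_inter_eq_empty.1 (Finset.disjoint_coe.2 (incompat_disjoint x y h))
  · ext φ
    simp only [Set.mem_iUnion, Finset.mem_coe, Set.mem_ofPred_eq, exists_prop]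
    exact ⟨cover z hz φ, fun ⟨x, hxz, hφ⟩ => hxz.1.1 hφ⟩
  · refine ⟨Measurable.of_discrete, 1, fun φ => ?_⟩
    by_cases hφ : φ ∈ (u a : Set Φ) <;> simp [hφ]
  · rw [setIntegral_indicator_one_uniformOfFintype, setIntegral_indicator_one_uniformOfFintype]
    exact div_lt_div_of_pos_right (mod_cast prefers x a h) (mod_cast Fintype.card_pos)

inductive Node_s17
  | root
  | x (i : Fin 3)
  | z (i : Fin 5)
  deriving DecidableEq, Fintype

inductive Act
  | a
  | b
  deriving DecidableEq

instance : Fintype Act := ⟨{.a, .b}, fun x => by cases x <;> simp⟩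

/-- Ordering nodes by inclusion of their events reproduces the paper's `≼`, the
reflexive-transitive closure of `z i ⋖ x i`, `z 3, z 4 ⋖ x i` and `x i ⋖ root`
(indices shifted to start at `0`). -/
def Node_s17.event : Node_s17 → Finset (Fin 5)
  | .root => Finset.univ
  | .x i => {i.castLE (by decide), 3, 4}
  | .z i => {i}

def Act.payoffEvent : Act → Finset (Fin 5)
  | .a => {0, 1, 2}
  | .b => {3, 4}

def plan : Node_s17 → Act
  | .root => .a
  | .x _ => .b
  | .z i => if i < 3 then .a else .b

theorem stmt17 :
    ∃ (X : Type) (le : X → X → Prop) (root : X) (A : Type) (inst : Fintype A)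
      (ζ : X → A),
      IsEvid le root ∧ @Fintype.card A inst = 2 ∧
      SCEURational le root ζ ∧ ¬ ISDPlan le Set.univ ζ := by
  refine ⟨Node_s17, fun x y => x.event ⊆ y.event, .root, Act, inferInstance, plan, ?_, rfl, ?_, ?_⟩
  · exact isEvid_of_subset _ _ (by decide) ⟨.z 0, by decide⟩ (by decide) (by decide)
  · exact sceuRational_of_subset _ _ _ Act.payoffEvent (by decide) rfl (by decide) (by decide)
      (by decide)
  · exact not_isdPlan_univ_of .root .b ⟨.x 0, by decide⟩ (by decide) (by decide)

end Evid
end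

section
/- There exists an evidential structure (X, ≼) with a 3-element alternative set A and an ISD-consistent plan ζ : X → A that is not SCEU-rational. Specifically, X = {∅, x₁, x₂, z₁, z₂, z₃} with ⋖ comprising (z₁,x₁), (z₂,x₂), (z₃,x₁), (z₃,x₂), (x₁,∅), (x₂,∅), ≼ its reflexive-transitive closure, A = {a,b,c}, ζ(∅) = ζ(z₃) = a, ζ(x₁) = ζ(z₂) = b, ζ(x₂) = ζ(z₁) = c: this ζ is ISD consistent but no SCEU representation rationalizes it. -/
namespace Evid

variable {X : Type*}

def le6 (x y : Fin 6) : Prop :=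
  x = y ∨ y = 0 ∨ (x = 3 ∧ y = 1) ∨ (x = 4 ∧ y = 2) ∨ (x = 5 ∧ (y = 1 ∨ y = 2))

instance (x y : Fin 6) : Decidable (le6 x y) := by unfold le6; infer_instance
instance (x y : Fin 6) : Decidable (Strict le6 x y) := by unfold Strict; infer_instance
instance (x y : Fin 6) : Decidable (Imm le6 x y) := by unfold Imm; infer_instance
instance (x y : Fin 6) : Decidable (Incompat le6 x y) := by unfold Incompat; infer_instance

def zeta6 : Fin 6 → Fin 3 := ![0, 1, 2, 2, 1, 0]

def rank6 : Fin 6 → ℕ := ![0, 1, 1, 2, 2, 2]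

lemma le6_evid : IsEvid le6 0 where
  refl := by decide
  trans := by decide
  wf := by
    rintro ⟨f, hf⟩
    have hr : ∀ x y, Strict le6 x y → rank6 y < rank6 x := by decide
    have key : ∀ k, rank6 (f 0) + k ≤ rank6 (f k) := by
      intro k
      induction k with
      | zero => simp
      | succ n ih => have := hr _ _ (hf n); omega
    have hb : ∀ u : Fin 6, rank6 u ≤ 2 := by decide
    have h3 := key 3
    have b0 := hb (f 0)
    have b3 := hb (f 3)
    omega
  root_top := by decide
  nontriv := ⟨1, by decide⟩
  interp := by decide
  finBranch := fun x => Set.toFinite _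
  incompat_wit := by decide

theorem stmt18 :
    ∃ (X : Type) (le : X → X → Prop) (root : X) (A : Type) (inst : Fintype A)
      (ζ : X → A),
      IsEvid le root ∧ @Fintype.card A inst = 3 ∧
      ISDPlan le Set.univ ζ ∧ ¬ SCEURational le root ζ := by
  refine ⟨Fin 6, le6, 0, Fin 3, inferInstance, zeta6, le6_evid, by decide, ?_, ?_⟩
  · -- ISD consistency
    have key : ∀ (a : Fin 3) (z : Fin 6), (∃ x, Imm le6 x z) →
        (∀ x, Imm le6 x z → zeta6 x = a) → zeta6 z = a := by decide
    intro a z _ hne hall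
    exact key a z hne (fun x hx => (hall x hx).2)
  · -- not SCEU-rational
    rintro ⟨Φ, m, c, Pr, f, hprob, hmeas, hroot, hle, hinc, hunion, hf, hlt⟩
    -- basic unions
    have hbu : ∀ z u v : Fin 6, (∀ x : Fin 6, Imm le6 x z ↔ (x = u ∨ x = v)) →
        c z = c u ∪ c v := by
      intro z u v hiff
      have hz := hunion z ⟨u, (hiff u).mpr (Or.inl rfl)⟩
      rw [hz]
      ext φ
      simp only [Set.mem_iUnion, Set.mem_setOf_eq, Set.mem_union, exists_prop]
      constructor
      · rintro ⟨x, hx, hφ⟩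
        rcases (hiff x).mp hx with h | h <;> subst h
        · exact Or.inl hφ
        · exact Or.inr hφ
      · rintro (h | h)
        · exact ⟨u, (hiff u).mpr (Or.inl rfl), h⟩
        · exact ⟨v, (hiff v).mpr (Or.inr rfl), h⟩
    have h0 : c 0 = c 1 ∪ c 2 := hbu 0 1 2 (by decide)
    have h1 : c 1 = c 3 ∪ c 5 := hbu 1 3 5 (by decide)
    have h2 : c 2 = c 4 ∪ c 5 := hbu 2 4 5 (by decide)
    have h51 : c 5 ⊆ c 1 := (hle 5 1).mp (by decide)
    have h52 : c 5 ⊆ c 2 := (hle 5 2).mp (by decide)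
    -- two disjoint covers of Φ
    have u14 : c 1 ∪ c 4 = Set.univ := by
      rw [← hroot, h0, h2]
      ext φ
      have h5 := @h51 φ
      simp only [Set.mem_union]
      tauto
    have u23 : c 2 ∪ c 3 = Set.univ := by
      rw [← hroot, h0, h1]
      ext φ
      have h5 := @h52 φ
      simp only [Set.mem_union]
      tauto
    have d14 : Disjoint (c 1) (c 4) :=
      Set.disjoint_iff_inter_eq_empty.mpr (hinc 1 4 (by decide))
    have d23 : Disjoint (c 2) (c 3) :=
      Set.disjoint_iff_inter_eq_empty.mpr (hinc 2 3 (by decide))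
    -- integrability
    have hint : ∀ a : Fin 3, MeasureTheory.Integrable (f a) Pr := by
      intro a
      obtain ⟨hm, M, hM⟩ := hf a
      refine ⟨hm.aestronglyMeasurable, MeasureTheory.HasFiniteIntegral.of_bounded
        (C := M) (Filter.Eventually.of_forall fun φ => ?_)⟩
      simpa [Real.norm_eq_abs] using hM φ
    -- splitting the integral over a disjoint cover
    have split : ∀ (s t : Set Φ), s ∪ t = Set.univ → Disjoint s t → MeasurableSet t →
        ∀ a : Fin 3, (∫ φ, f a φ ∂Pr) =
          (∫ φ in s, f a φ ∂Pr) + ∫ φ in t, f a φ ∂Pr := by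
      intro s t huniv hdisj hmt a
      rw [← MeasureTheory.setIntegral_univ, ← huniv]
      exact MeasureTheory.setIntegral_union hdisj hmt
        ((hint a).integrableOn) ((hint a).integrableOn)
    have s14_1 := split (c 1) (c 4) u14 d14 (hmeas 4).1 1
    have s14_2 := split (c 1) (c 4) u14 d14 (hmeas 4).1 2
    have s23_1 := split (c 2) (c 3) u23 d23 (hmeas 3).1 1
    have s23_2 := split (c 2) (c 3) u23 d23 (hmeas 3).1 2
    -- the strict inequalities
    have z1 : zeta6 1 = 1 := by decide
    have z2 : zeta6 2 = 2 := by decide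
    have z3 : zeta6 3 = 2 := by decide
    have z4 : zeta6 4 = 1 := by decide
    have A1 := hlt 1 2 (by decide)
    have A4 := hlt 4 2 (by decide)
    have A2 := hlt 2 1 (by decide)
    have A3 := hlt 3 1 (by decide)
    rw [z1] at A1
    rw [z4] at A4
    rw [z2] at A2
    rw [z3] at A3
    linarith

end Evid
end
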